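/- Let A be a Noetherian commutative ring, I and J ideals of A, and M a finitely generated A-module. Denote by M^∧_K = lim_n M/KⁿM the K-adic completion for an ideal K. Then the (I+J)-adic completion of M is naturally isomorphic to the J-adic completion of the I-adic completion of M: M^∧_{I+J} ≅ (M^∧_I)^∧_J. -/

import Mathlib

suppress_compilation

open Submodule AdicCompletion TensorProduct

theorem AdicCompletion.transitionMap_mk {R : Type*} [CommRing R] {I : Ideal R} {M : Type*}
    [AddCommGroup M] [Module R M] {m n : ℕ} (hmn : m ≤ n) (x : M) :
    transitionMap I M hmn (Submodule.Quotient.mk (p := (I ^ n • ⊤ : Submodule R M)) x) =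
      Submodule.Quotient.mk (p := (I ^ m • ⊤ : Submodule R M)) x := rfl

namespace AdicIter

universe u₁ u₂
variable {A : Type u₁} [CommRing A] (I J : Ideal A)
  (M : Type u₂) [AddCommGroup M] [Module A M]

lemma add_pow_le : ∀ m n : ℕ, (I + J) ^ (m + n) ≤ I ^ m ⊔ J ^ n := by
  intro m n
  induction m generalizing n with
  | zero => exact le_sup_of_le_left (by simp [Ideal.one_eq_top])
  | succ m ih =>
    induction n with
    | zero => exact le_sup_of_le_right (by simpa using le_rfl)
    | succ n ih2 =>
      have h1 : (I + J) ^ (m + 1 + (n + 1)) = (I + J) * (I + J) ^ (m + 1 + n) := by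
        rw [← pow_succ']; ring_nf
      rw [h1, Ideal.add_eq_sup, Submodule.sup_mul]
      apply sup_le
      · calc I * (I ⊔ J) ^ (m + 1 + n) ≤ I * (I ^ m ⊔ J ^ (n+1)) := by
              apply Ideal.mul_mono_right
              simpa [Ideal.add_eq_sup, show m + (n+1) = m + 1 + n by ring] using ih (n+1)
          _ ≤ I ^ (m+1) ⊔ J ^ (n+1) := by
              rw [Submodule.mul_sup]
              apply sup_le
              · exact le_sup_of_le_left (by rw [← pow_succ'])
              · exact le_sup_of_le_right Ideal.mul_le_right
      · calc J * (I ⊔ J) ^ (m + 1 + n) ≤ J * (I ^ (m+1) ⊔ J ^ n) := by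
              apply Ideal.mul_mono_right
              simpa [Ideal.add_eq_sup] using ih2
          _ ≤ I ^ (m+1) ⊔ J ^ (n+1) := by
              rw [Submodule.mul_sup]
              apply sup_le
              · exact le_sup_of_le_left Ideal.mul_le_right
              · exact le_sup_of_le_right (by rw [← pow_succ'])

lemma map_mkQ_smul_top (K : Ideal A) (p : Submodule A M) :
    Submodule.map (mkQ p) (K • ⊤ : Submodule A M) = (K • ⊤ : Submodule A (M ⧸ p)) := by
  rw [Submodule.map_smul'', Submodule.map_top, Submodule.range_mkQ]

lemma smul_top_le_ker (n m : ℕ) :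
    ((I + J) ^ (m + n) • ⊤ : Submodule A M) ≤
      LinearMap.ker ((mkQ (I ^ m • ⊤ : Submodule A (M ⧸ (J ^ n • ⊤ : Submodule A M)))) ∘ₗ
        mkQ (J ^ n • ⊤ : Submodule A M)) := by
  intro x hx
  have hx' : x ∈ ((I ^ m ⊔ J ^ n) • ⊤ : Submodule A M) :=
    smul_mono_left (add_pow_le I J m n) hx
  rw [sup_smul] at hx'
  obtain ⟨y, hy, z, hz, rfl⟩ := Submodule.mem_sup.mp hx'
  have h1 : (mkQ (J ^ n • ⊤ : Submodule A M)) z = 0 := (Submodule.Quotient.mk_eq_zero _).2 hz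
  have h2 : (mkQ (J ^ n • ⊤ : Submodule A M)) y ∈
      (I ^ m • ⊤ : Submodule A (M ⧸ (J ^ n • ⊤ : Submodule A M))) := by
    rw [← map_mkQ_smul_top]
    exact Submodule.mem_map_of_mem hy
  rw [LinearMap.mem_ker, LinearMap.comp_apply, map_add, h1, add_zero]
  exact (Submodule.Quotient.mk_eq_zero _).2 h2

/-- The map `M ⧸ (I+J)^(m+n) → (M ⧸ J^n) ⧸ I^m`. -/
def hq (n m : ℕ) :
    (M ⧸ ((I + J) ^ (m + n) • ⊤ : Submodule A M)) →ₗ[A]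
      ((M ⧸ (J ^ n • ⊤ : Submodule A M)) ⧸
        (I ^ m • ⊤ : Submodule A (M ⧸ (J ^ n • ⊤ : Submodule A M)))) :=
  liftQ _ ((mkQ _) ∘ₗ (mkQ _)) (smul_top_le_ker I J M n m)

@[simp] lemma hq_mk (n m : ℕ) (u : M) :
    hq I J M n m (Submodule.Quotient.mk u) =
      Submodule.Quotient.mk (Submodule.Quotient.mk u) := rfl

/-- The map from the `(I+J)`-adic completion of `M` to the `I`-adic completion of `M ⧸ J^n`. -/
def g (n : ℕ) : AdicCompletion (I + J) M →ₗ[A]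
    AdicCompletion I (M ⧸ (J ^ n • ⊤ : Submodule A M)) :=
  AdicCompletion.lift I (fun m => hq I J M n m ∘ₗ eval (I + J) M (m + n)) (by
    intro m m' hle
    refine LinearMap.ext fun x => ?_
    obtain ⟨u, hu⟩ := Submodule.Quotient.mk_surjective _ (x.val (m' + n))
    have hval : x.val (m + n) = Submodule.Quotient.mk u := by
      have h := x.property (show m + n ≤ m' + n by omega)
      rw [← hu, transitionMap_mk] at h
      exact h.symm
    simp only [LinearMap.comp_apply, eval_apply, ← hu, hval, hq_mk, transitionMap_mk])

@[simp] lemma g_val (n m : ℕ) (x : AdicCompletion (I + J) M) :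
    (g I J M n x).val m = hq I J M n m (x.val (m + n)) := rfl

end AdicIter

namespace AdicIter
section Noetherian

universe u
variable {A : Type u} [CommRing A] (I J : Ideal A)
  (M : Type u) [AddCommGroup M] [Module A M]
variable [IsNoetherianRing A] [Module.Finite A M]

instance (p : Submodule A M) : Module.Finite A (M ⧸ p) :=
  Module.Finite.of_surjective (mkQ p) (Submodule.Quotient.mk_surjective p)

/-- The canonical projection between completions. -/
def piI (n : ℕ) : AdicCompletion I M →ₗ[A]
    AdicCompletion I (M ⧸ (J ^ n • ⊤ : Submodule A M)) :=
  (AdicCompletion.map I (mkQ (J ^ n • ⊤ : Submodule A M))).restrictScalars A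

lemma piI_surjective (n : ℕ) : Function.Surjective (piI I J M n) :=
  AdicCompletion.map_surjective I (Submodule.Quotient.mk_surjective _)

lemma smul_quot_eq_zero {n : ℕ} {a : A} (ha : a ∈ J ^ n)
    (v : M ⧸ (J ^ n • ⊤ : Submodule A M)) : a • v = 0 := by
  obtain ⟨w, rfl⟩ := Submodule.Quotient.mk_surjective _ v
  rw [← Submodule.Quotient.mk_smul, Submodule.Quotient.mk_eq_zero]
  exact smul_mem_smul ha mem_top

lemma smul_vanish {n : ℕ} {a : A} (ha : a ∈ J ^ n)
    (y : AdicCompletion I (M ⧸ (J ^ n • ⊤ : Submodule A M))) : a • y = 0 := by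
  ext m
  obtain ⟨v, hv⟩ := Submodule.Quotient.mk_surjective _ (y.val m)
  rw [AdicCompletion.val_smul_apply, AdicCompletion.val_zero_apply, ← hv,
    ← Submodule.Quotient.mk_smul, smul_quot_eq_zero J M ha v]
  simp

lemma smul_closed (K : Ideal A) (b : AdicCompletion I A) {y : AdicCompletion I M}
    (hy : y ∈ (K • ⊤ : Submodule A (AdicCompletion I M))) :
    b • y ∈ (K • ⊤ : Submodule A (AdicCompletion I M)) := by
  refine Submodule.smul_induction_on hy ?_ ?_
  · intro a ha x _
    have h : b • (a • x) = a • (b • x) := by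
      rw [← algebraMap_smul (AdicCompletion I A) a x, smul_smul, mul_comm,
        ← smul_smul, algebraMap_smul]
    rw [h]
    exact smul_mem_smul ha mem_top
  · intro x y hx hy
    rw [smul_add]
    exact add_mem hx hy

lemma of_mem_smul_top (K : Ideal A) {x : M} (hx : x ∈ (K • ⊤ : Submodule A M)) :
    AdicCompletion.of I M x ∈ (K • ⊤ : Submodule A (AdicCompletion I M)) := by
  have h : AdicCompletion.of I M x ∈
      Submodule.map (AdicCompletion.of I M) (K • ⊤ : Submodule A M) :=
    Submodule.mem_map_of_mem hx
  rw [Submodule.map_smul''] at h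
  have hle : K • Submodule.map (AdicCompletion.of I M) (⊤ : Submodule A M) ≤
      (K • ⊤ : Submodule A (AdicCompletion I M)) := smul_mono_right K le_top
  exact hle h

lemma algmap_eq_lTensor {V W : Type*} [AddCommGroup V] [Module A V]
    [AddCommGroup W] [Module A W] (f : V →ₗ[A] W) (w : AdicCompletion I A ⊗[A] V) :
    TensorProduct.AlgebraTensorModule.map
      (LinearMap.id (R := AdicCompletion I A) (M := AdicCompletion I A)) f w =
      LinearMap.lTensor (AdicCompletion I A) f w := by
  induction w using TensorProduct.induction_on with
  | zero => simp
  | tmul b m => simp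
  | add u v hu hv => rw [map_add, map_add, hu, hv]

lemma ker_piI (n : ℕ) :
    LinearMap.ker (piI I J M n) = (J ^ n • ⊤ : Submodule A (AdicCompletion I M)) := by
  apply le_antisymm
  · intro x hx
    have hx' : AdicCompletion.map I (mkQ (J ^ n • ⊤ : Submodule A M)) x = 0 := hx
    obtain ⟨z, rfl⟩ := (ofTensorProduct_bijective_of_finite_of_isNoetherian I M).2 x
    have hnat := LinearMap.congr_fun
      (AdicCompletion.ofTensorProduct_naturality I (mkQ (J ^ n • ⊤ : Submodule A M))) z
    rw [LinearMap.comp_apply, LinearMap.comp_apply] at hnat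
    rw [hnat] at hx'
    have hz := (ofTensorProduct_bijective_of_finite_of_isNoetherian I
      (M ⧸ (J ^ n • ⊤ : Submodule A M))).1 (hx'.trans (_root_.map_zero _).symm)
    rw [algmap_eq_lTensor] at hz
    have hflat : Module.Flat A (AdicCompletion I A) :=
      (AdicCompletion.flat_of_isNoetherian (R := A) I)
    have hex := Module.Flat.lTensor_exact (AdicCompletion I A)
      (LinearMap.exact_subtype_mkQ (J ^ n • ⊤ : Submodule A M))
    obtain ⟨w, hw⟩ := (hex z).mp hz
    have key : ∀ w : AdicCompletion I A ⊗[A] (J ^ n • ⊤ : Submodule A M),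
        ofTensorProduct I M
          (LinearMap.lTensor (AdicCompletion I A)
            (Submodule.subtype (J ^ n • ⊤ : Submodule A M)) w) ∈
          (J ^ n • ⊤ : Submodule A (AdicCompletion I M)) := by
      intro w
      induction w using TensorProduct.induction_on with
      | zero => simp
      | tmul b s =>
        rw [LinearMap.lTensor_tmul, ofTensorProduct_tmul]
        exact smul_closed I M _ b (of_mem_smul_top I M _ s.2)
      | add u v hu hv =>
        rw [map_add, map_add]
        exact add_mem hu hv
    rw [← hw]
    exact key w
  · rw [Submodule.smul_le]
    intro a ha x _
    have : piI I J M n (a • x) = a • piI I J M n x := map_smul _ a x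
    rw [LinearMap.mem_ker, this, smul_vanish I J M ha]

/-- `fq` : canonical map between quotients. -/
def fq {n n' : ℕ} (h : n ≤ n') :
    (M ⧸ (J ^ n' • ⊤ : Submodule A M)) →ₗ[A] (M ⧸ (J ^ n • ⊤ : Submodule A M)) :=
  liftQ _ (mkQ _) (by
    rw [ker_mkQ]
    exact smul_mono_left (Ideal.pow_le_pow_right h))

@[simp] lemma fq_mk {n n' : ℕ} (h : n ≤ n') (v : M) :
    fq J M h (Submodule.Quotient.mk v) = Submodule.Quotient.mk v := rfl

/-- `rho` : induced map on completions. -/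
def rho {n n' : ℕ} (h : n ≤ n') :
    AdicCompletion I (M ⧸ (J ^ n' • ⊤ : Submodule A M)) →ₗ[A]
      AdicCompletion I (M ⧸ (J ^ n • ⊤ : Submodule A M)) :=
  (AdicCompletion.map I (fq J M h)).restrictScalars A

@[simp] lemma rho_val {n n' : ℕ} (h : n ≤ n')
    (z : AdicCompletion I (M ⧸ (J ^ n' • ⊤ : Submodule A M))) (m : ℕ) :
    (rho I J M h z).val m = LinearMap.reduceModIdeal (I ^ m) (fq J M h) (z.val m) := rfl

/-- The quotient of the completion by `J^n` maps to the completion of the quotient. -/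
def pibarAux (n : ℕ) :
    (AdicCompletion I M ⧸ (J ^ n • ⊤ : Submodule A (AdicCompletion I M))) →ₗ[A]
      AdicCompletion I (M ⧸ (J ^ n • ⊤ : Submodule A M)) :=
  liftQ _ (piI I J M n) (le_of_eq (ker_piI I J M n).symm)

lemma pibarAux_bijective (n : ℕ) : Function.Bijective (pibarAux I J M n) := by
  constructor
  · rw [← LinearMap.ker_eq_bot]
    exact Submodule.ker_liftQ_eq_bot _ _ _ (le_of_eq (ker_piI I J M n))
  · intro y
    obtain ⟨x, hx⟩ := piI_surjective I J M n y
    exact ⟨Submodule.Quotient.mk x, hx⟩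

/-- `pibar` as equivalence. -/
def pibar (n : ℕ) :
    (AdicCompletion I M ⧸ (J ^ n • ⊤ : Submodule A (AdicCompletion I M))) ≃ₗ[A]
      AdicCompletion I (M ⧸ (J ^ n • ⊤ : Submodule A M)) :=
  LinearEquiv.ofBijective _ (pibarAux_bijective I J M n)

@[simp] lemma pibar_mk (n : ℕ) (x : AdicCompletion I M) :
    pibar I J M n (Submodule.Quotient.mk x) = piI I J M n x := rfl

lemma pibar_transition {n n' : ℕ} (h : n ≤ n')
    (y : AdicCompletion I M ⧸ (J ^ n' • ⊤ : Submodule A (AdicCompletion I M))) :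
    pibar I J M n (transitionMap J (AdicCompletion I M) h y) =
      rho I J M h (pibar I J M n' y) := by
  obtain ⟨x, rfl⟩ := Submodule.Quotient.mk_surjective _ y
  rw [transitionMap_mk, pibar_mk, pibar_mk]
  have hcomp : (fq J M h) ∘ₗ mkQ (J ^ n' • ⊤ : Submodule A M) =
      mkQ (J ^ n • ⊤ : Submodule A M) := by
    refine LinearMap.ext fun v => ?_
    rfl
  have h2 := LinearMap.congr_fun
    (AdicCompletion.map_comp I (mkQ (J ^ n' • ⊤ : Submodule A M)) (fq J M h)) x
  simp only [LinearMap.comp_apply] at h2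
  show AdicCompletion.map I (mkQ _) x =
    AdicCompletion.map I (fq J M h) (AdicCompletion.map I (mkQ _) x)
  rw [h2, hcomp]

lemma rho_g {n n' : ℕ} (h : n ≤ n') (x : AdicCompletion (I + J) M) :
    rho I J M h (g I J M n' x) = g I J M n x := by
  ext m
  obtain ⟨v, hv⟩ := Submodule.Quotient.mk_surjective _ (x.val (m + n'))
  have hval : x.val (m + n) = Submodule.Quotient.mk v := by
    have hp := x.property (show m + n ≤ m + n' by omega)
    rw [← hv, transitionMap_mk] at hp
    exact hp.symm
  rw [rho_val, g_val, g_val, ← hv, hval, hq_mk, hq_mk, LinearMap.reduceModIdeal_apply, fq_mk]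

/-- The comparison map. -/
def Phi : AdicCompletion (I + J) M →ₗ[A] AdicCompletion J (AdicCompletion I M) :=
  AdicCompletion.lift J
    (fun n => ((pibar I J M n).symm : _ →ₗ[A] _) ∘ₗ g I J M n) (by
    intro n n' h
    refine LinearMap.ext fun x => ?_
    apply (pibar I J M n).injective
    simp only [LinearMap.comp_apply, LinearEquiv.coe_coe]
    rw [pibar_transition I J M h, LinearEquiv.apply_symm_apply,
      LinearEquiv.apply_symm_apply, rho_g])

@[simp] lemma Phi_val (n : ℕ) (x : AdicCompletion (I + J) M) :
    (Phi I J M x).val n = (pibar I J M n).symm (g I J M n x) := rfl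

lemma pow_mono_ideal {K L : Ideal A} (h : K ≤ L) : ∀ k : ℕ, K ^ k ≤ L ^ k := by
  intro k
  induction k with
  | zero => simp
  | succ k ih =>
    rw [pow_succ, pow_succ]
    exact Ideal.mul_mono ih h

lemma sup_smul_le (k : ℕ) :
    (I ^ k • ⊤ ⊔ J ^ k • ⊤ : Submodule A M) ≤ ((I + J) ^ k • ⊤ : Submodule A M) := by
  rw [← sup_smul]
  refine smul_mono_left (sup_le ?_ ?_)
  · exact pow_mono_ideal (by rw [Ideal.add_eq_sup]; exact le_sup_left) k
  · exact pow_mono_ideal (by rw [Ideal.add_eq_sup]; exact le_sup_right) k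

lemma mem_of_quot_mem (k : ℕ) {w : M}
    (h : mkQ (J ^ k • ⊤ : Submodule A M) w ∈
      (I ^ k • ⊤ : Submodule A (M ⧸ (J ^ k • ⊤ : Submodule A M)))) :
    w ∈ ((I + J) ^ k • ⊤ : Submodule A M) := by
  rw [← map_mkQ_smul_top] at h
  obtain ⟨v, hv, hvw⟩ := h
  have hsub : w - v ∈ (J ^ k • ⊤ : Submodule A M) := by
    rw [← Submodule.Quotient.eq]
    exact hvw.symm
  have hw : w = v + (w - v) := by abel
  rw [hw]
  exact sup_smul_le I J M k (Submodule.add_mem_sup hv hsub)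

lemma Phi_injective : Function.Injective (Phi I J M) := by
  rw [injective_iff_map_eq_zero]
  intro x hx
  refine AdicCompletion.ext fun k => ?_
  rw [AdicCompletion.val_zero_apply]
  have hg : g I J M k x = 0 := by
    have h1 := congrArg (fun z => AdicCompletion.eval J (AdicCompletion I M) k z) hx
    simp only [eval_apply, Phi_val, AdicCompletion.val_zero_apply] at h1
    exact ((LinearEquiv.map_eq_zero_iff _).mp h1)
  have h2 := congrArg (fun z => AdicCompletion.eval I _ k z) hg
  simp only [eval_apply, g_val, AdicCompletion.val_zero_apply] at h2
  obtain ⟨v, hv⟩ := Submodule.Quotient.mk_surjective _ (x.val (k + k))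
  rw [← hv, hq_mk, Submodule.Quotient.mk_eq_zero] at h2
  have hval : x.val k = Submodule.Quotient.mk v := by
    have hp := x.property (show k ≤ k + k by omega)
    rw [← hv, transitionMap_mk] at hp
    exact hp.symm
  rw [hval, Submodule.Quotient.mk_eq_zero]
  exact mem_of_quot_mem I J M k h2

lemma Phi_surjective : Function.Surjective (Phi I J M) := by
  intro y
  have hrep : ∀ k : ℕ, ∃ u : M,
      (Submodule.Quotient.mk (Submodule.Quotient.mk u) :
        (M ⧸ (J ^ k • ⊤ : Submodule A M)) ⧸
          (I ^ k • ⊤ : Submodule A (M ⧸ (J ^ k • ⊤ : Submodule A M)))) =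
        (pibar I J M k (y.val k)).val k := by
    intro k
    obtain ⟨v, hv⟩ := Submodule.Quotient.mk_surjective _ ((pibar I J M k (y.val k)).val k)
    obtain ⟨u, hu⟩ := Submodule.Quotient.mk_surjective _ v
    exact ⟨u, by rw [hu, hv]⟩
  choose u hu using hrep
  have hd : ∀ l n m : ℕ, n ≤ l → m ≤ l →
      (Submodule.Quotient.mk (Submodule.Quotient.mk (u l)) :
        (M ⧸ (J ^ n • ⊤ : Submodule A M)) ⧸
          (I ^ m • ⊤ : Submodule A (M ⧸ (J ^ n • ⊤ : Submodule A M)))) =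
        (pibar I J M n (y.val n)).val m := by
    intro l n m hn hm
    have h1 : (Submodule.Quotient.mk (Submodule.Quotient.mk (u l)) :
        (M ⧸ (J ^ l • ⊤ : Submodule A M)) ⧸
          (I ^ m • ⊤ : Submodule A (M ⧸ (J ^ l • ⊤ : Submodule A M)))) =
        (pibar I J M l (y.val l)).val m := by
      rw [← (pibar I J M l (y.val l)).property hm, ← hu l, transitionMap_mk]
    have h2 := congrArg (LinearMap.reduceModIdeal (I ^ m) (fq J M hn)) h1
    rw [LinearMap.reduceModIdeal_apply, fq_mk] at h2
    rw [h2]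
    show (AdicCompletion.map I (fq J M hn) (pibar I J M l (y.val l))).val m = _
    have h3 : AdicCompletion.map I (fq J M hn) (pibar I J M l (y.val l)) =
        pibar I J M n (y.val n) := by
      rw [← y.property hn, pibar_transition I J M hn]
      rfl
    rw [h3]
  have hcauchy : IsAdicCauchy (I + J) M u := by
    intro k l hkl
    have h1 := (hd l k k hkl hkl).trans (hd k k k le_rfl le_rfl).symm
    rw [← sub_eq_zero, ← Submodule.Quotient.mk_sub, Submodule.Quotient.mk_eq_zero,
      ← Submodule.Quotient.mk_sub] at h1
    have h2 := mem_of_quot_mem I J M k h1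
    rw [SModEq.sub_mem, ← neg_sub (u l) (u k)]
    exact neg_mem h2
  refine ⟨AdicCompletion.mk (I + J) M ⟨u, hcauchy⟩, ?_⟩
  refine AdicCompletion.ext fun n => ?_
  rw [Phi_val, LinearEquiv.symm_apply_eq]
  refine AdicCompletion.ext fun m => ?_
  rw [g_val]
  have hval : (AdicCompletion.mk (I + J) M ⟨u, hcauchy⟩).val (m + n) =
      Submodule.Quotient.mk (u (m + n)) := rfl
  rw [hval, hq_mk]
  exact hd (m + n) n m (by omega) (by omega)

/-- The comparison equivalence, same-universe core case. -/
theorem core : Nonempty (AdicCompletion (I + J) M ≃ₗ[A] AdicCompletion J (AdicCompletion I M)) :=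
  ⟨LinearEquiv.ofBijective (Phi I J M) ⟨Phi_injective I J M, Phi_surjective I J M⟩⟩

end Noetherian

end AdicIter

/-- For a Noetherian ring `A`, ideals `I, J` and a finitely generated module `M`, the
`(I+J)`-adic completion of `M` is isomorphic to the `J`-adic completion of the `I`-adic
completion of `M`. -/
theorem adicCompletion_sum_iso_iterated (A : Type*) [CommRing A] [IsNoetherianRing A]
    (I J : Ideal A) (M : Type*) [AddCommGroup M] [Module A M] [Module.Finite A M] :
    Nonempty (AdicCompletion (I + J) M ≃ₗ[A] AdicCompletion J (AdicCompletion I M)) := by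
  obtain ⟨k, p, hp⟩ := Module.Finite.exists_fin' A M
  let M₀ := (Fin k → A) ⧸ LinearMap.ker p
  have h0 : Module.Finite A M₀ :=
    Module.Finite.of_surjective (Submodule.mkQ _) (Submodule.Quotient.mk_surjective _)
  let e₀ : M₀ ≃ₗ[A] M := LinearMap.quotKerEquivOfSurjective p hp
  obtain ⟨E⟩ := AdicIter.core I J M₀
  let E1 : AdicCompletion (I + J) M₀ ≃ₗ[A] AdicCompletion (I + J) M :=
    (AdicCompletion.congr (I + J) e₀).restrictScalars A
  let E2 : AdicCompletion I M₀ ≃ₗ[A] AdicCompletion I M :=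
    (AdicCompletion.congr I e₀).restrictScalars A
  let E3 : AdicCompletion J (AdicCompletion I M₀) ≃ₗ[A]
      AdicCompletion J (AdicCompletion I M) :=
    (AdicCompletion.congr J E2).restrictScalars A
  exact ⟨E1.symm.trans (E.trans E3)⟩
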